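/- Let V be an FI-module. Then the kernel KV of the natural map ι: V → SV is naturally isomorphic to H_1^D(V), the first left derived functor of the derivative functor D applied to V. -/

import Mathlib

/-!
Background for: W.L. Gan, "A long exact sequence for homology of FI-modules".

`FICat` is the category of finite sets and injections; an FI-module over a
commutative ring `k` is a functor `FICat ⥤ ModuleCat k`.  `Sfun` is the shift
functor, `iota` the canonical map `V ⟶ SV`, `Dfun` the derivative (cokernel of
`iota`), `Kfun` its kernel, `Ffunctor` the functor `V ↦ V/JV`, and `HF a` the
FI-homology functor, i.e. the `a`-th left derived functor of `Ffunctor`.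
-/

open CategoryTheory CategoryTheory.Limits

/-- The category `FI` of finite sets and injective maps. -/
structure FICat : Type 1 where
  carrier : Type
  [fintype : Fintype carrier]

attribute [instance] FICat.fintype

instance : Category.{0} FICat where
  Hom X Y := {f : X.carrier → Y.carrier // Function.Injective f}
  id X := ⟨id, fun _ _ h => h⟩
  comp f g := ⟨g.1 ∘ f.1, g.2.comp f.2⟩

/-- The category of FI-modules over `k`. -/
abbrev FIMod (k : Type) [CommRing k] := FICat ⥤ ModuleCat.{0} k

variable (k : Type) [CommRing k]

/-- The finite set `{1, …, n}` as an object of `FI`. -/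
def FIfin (n : ℕ) : FICat := ⟨Fin n⟩

/-- The self-embedding `X ↦ X ⊔ {⋆}` of `FI`. -/
def sigmaF : FICat ⥤ FICat where
  obj X := ⟨X.carrier ⊕ PUnit⟩
  map f := ⟨Sum.map f.1 id, f.2.sumMap Function.injective_id⟩
  map_id X := by apply Subtype.ext; funext x; cases x <;> rfl
  map_comp f g := by apply Subtype.ext; funext x; cases x <;> rfl

/-- The shift functor `S` on FI-modules: `(SV)_X = V_{X ⊔ {⋆}}`. -/
def Sfun : FIMod k ⥤ FIMod k := (Functor.whiskeringLeft _ _ _).obj (sigmaF)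

instance : (Sfun k).Additive where
  map_add := by intros; apply NatTrans.ext; funext X; rfl

/-- The inclusion `X ↪ X ⊔ {⋆}` in `FI`. -/
def inclStar (X : FICat) : X ⟶ (sigmaF).obj X := ⟨Sum.inl, Sum.inl_injective⟩

/-- The natural map `ι : V ⟶ SV`. -/
def iota (V : FIMod k) : V ⟶ (Sfun k).obj V where
  app X := V.map (inclStar X)
  naturality X Y f := by
    dsimp [Sfun]
    rw [← V.map_comp, ← V.map_comp]
    congr 1

lemma iota_natural {V W : FIMod k} (η : V ⟶ W) :
    iota k V ≫ (Sfun k).map η = η ≫ iota k W := by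
  apply NatTrans.ext; funext X
  exact (η.naturality (inclStar X))

/-- The derivative functor `D`, with `DV = coker(ι : V → SV)`. -/
noncomputable def Dfun : FIMod k ⥤ FIMod k where
  obj V := cokernel (iota k V)
  map {V W} η := cokernel.map _ _ η ((Sfun k).map η) (iota_natural k η)
  map_id V := by apply coequalizer.hom_ext; simp
  map_comp f g := by apply coequalizer.hom_ext; simp

/-- The kernel functor `K`, with `KV = ker(ι : V → SV)`. -/
noncomputable def Kfun : FIMod k ⥤ FIMod k where
  obj V := kernel (iota k V)
  map {V W} η := kernel.map _ _ η ((Sfun k).map η) (iota_natural k η)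
  map_id V := by apply equalizer.hom_ext; simp
  map_comp f g := by apply equalizer.hom_ext; simp

noncomputable instance : (Dfun k).Additive where
  map_add := by intros; apply coequalizer.hom_ext; erw [Preadditive.comp_add]; simp [Dfun]; rfl

/-- `(JV)_X`: the submodule of `V_X` spanned by the images of `f_* : V_Y → V_X`
over all injections `f : Y → X` with `|Y| < |X|` (i.e., non-surjective `f`). -/
def Jsub (V : FIMod k) (X : FICat) : Submodule k (V.obj X) :=
  ⨆ (p : Σ Y : FICat, Y ⟶ X) (_ : ¬ Function.Surjective p.2.1),
    LinearMap.range (V.map p.2).hom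

lemma Jsub_comap {V : FIMod k} {X Y : FICat} (f : X ⟶ Y) :
    Jsub k V X ≤ (Jsub k V Y).comap (V.map f).hom := by
  apply iSup_le
  rintro ⟨Z, g⟩
  apply iSup_le
  intro hg
  rintro _ ⟨w, rfl⟩
  have h1 : (V.map f).hom ((V.map g).hom w) = (V.map (g ≫ f)).hom w := by
    rw [V.map_comp]; rfl
  have h2 : ¬ Function.Surjective (g ≫ f).1 := by
    intro hs
    apply hg
    intro x
    obtain ⟨z, hz⟩ := hs (f.1 x)
    exact ⟨z, f.2 hz⟩
  refine Submodule.mem_comap.2 ?_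
  rw [h1]
  exact Submodule.mem_iSup_of_mem ⟨Z, g ≫ f⟩ (Submodule.mem_iSup_of_mem h2 ⟨w, rfl⟩)

/-- The right exact functor `F : V ↦ V/JV` on FI-modules. -/
noncomputable def Ffunctor : FIMod k ⥤ FIMod k where
  obj V :=
  { obj := fun X => ModuleCat.of k (V.obj X ⧸ Jsub k V X)
    map := fun {X Y} f => ModuleCat.ofHom (Submodule.mapQ _ _ (V.map f).hom (Jsub_comap k f))
    map_id := fun X => by
      apply ModuleCat.hom_ext
      apply Submodule.linearMap_qext
      ext x
      simp [V.map_id]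
    map_comp := fun {X Y Z} f g => by
      apply ModuleCat.hom_ext
      apply Submodule.linearMap_qext
      ext x
      simp [V.map_comp] }
  map {V W} η :=
  { app := fun X => ModuleCat.ofHom (Submodule.mapQ _ _ (η.app X).hom
      (by
        apply iSup_le
        rintro ⟨Z, g⟩
        apply iSup_le
        intro hg
        rintro _ ⟨w, rfl⟩
        have h1 : (η.app X).hom ((V.map g).hom w) = (W.map g).hom ((η.app Z).hom w) :=
          DFunLike.congr_fun (congrArg ModuleCat.Hom.hom (η.naturality g)) w
        refine Submodule.mem_comap.2 ?_
        rw [h1]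
        exact Submodule.mem_iSup_of_mem ⟨Z, g⟩
          (Submodule.mem_iSup_of_mem hg ⟨_, rfl⟩)))
    naturality := fun {X Y} f => by
      apply ModuleCat.hom_ext
      apply Submodule.linearMap_qext
      ext x
      have h1 : (η.app Y).hom ((V.map f).hom x) = (W.map f).hom ((η.app X).hom x) :=
        DFunLike.congr_fun (congrArg ModuleCat.Hom.hom (η.naturality f)) x
      exact congrArg (Submodule.Quotient.mk) h1 }
  map_id V := by
    apply NatTrans.ext; funext X
    apply ModuleCat.hom_ext
    apply Submodule.linearMap_qext
    ext x
    rfl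
  map_comp f g := by
    apply NatTrans.ext; funext X
    apply ModuleCat.hom_ext
    apply Submodule.linearMap_qext
    ext x
    rfl

noncomputable instance : (Ffunctor k).Additive where
  map_add := by
    intros
    apply NatTrans.ext; funext X
    apply ModuleCat.hom_ext
    apply Submodule.linearMap_qext
    ext x
    rfl

section Homology

variable [EnoughProjectives (FIMod k)]

/-- The FI-homology functor `H_a`: the `a`-th left derived functor of `F`. -/
noncomputable def HF (a : ℕ) : FIMod k ⥤ FIMod k := (Ffunctor k).leftDerived a

/-- `H_a(V)_n`, the value of the FI-homology `H_a(V)` at `{1,…,n}`. -/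
noncomputable def Hmod (a : ℕ) (V : FIMod k) (n : ℕ) : ModuleCat k :=
  ((HF k a).obj V).obj (FIfin n)

/-- `hd_a(V) ≤ m` (with `m : ℤ`, so that `m = -1` means `H_a(V)` vanishes
in all degrees): the `a`-th homological degree is at most `m`. -/
def hdLE (a : ℕ) (V : FIMod k) (m : ℤ) : Prop :=
  ∀ n : ℕ, m < (n : ℤ) → Subsingleton (Hmod k a V n)

/-- `reg(V) ≤ c`: the Castelnuovo–Mumford regularity of `V` is at most `c`,
i.e. `hd_a(V) ≤ c + a` for all `a ≥ 1`. -/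
def regLE (V : FIMod k) (c : ℤ) : Prop :=
  ∀ a : ℕ, 1 ≤ a → hdLE k a V (c + a)

/-- An FI-module is zero iff it vanishes on every finite set. -/
def IsZeroMod (V : FIMod k) : Prop := ∀ X : FICat, Subsingleton (V.obj X)

/-- `V` is `F`-acyclic: `H_a(V) = 0` for all `a ≥ 1`. -/
def FAcyclic (V : FIMod k) : Prop :=
  ∀ a : ℕ, 1 ≤ a → IsZeroMod k ((HF k a).obj V)

/-- `V` is generated in degree `≤ kk` and related in degree `≤ d`: there is a
short exact sequence `0 → W → P → V → 0` with `P` projective generated in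
degree `≤ kk` and `W` generated in degree `≤ d`. -/
def GenRel (V : FIMod k) (kk d : ℤ) : Prop :=
  ∃ (W P : FIMod k) (f : W ⟶ P) (g : P ⟶ V) (w : f ≫ g = 0),
    Mono f ∧ Epi g ∧ (ShortComplex.mk f g w).Exact ∧
      Projective P ∧ hdLE k 0 P kk ∧ hdLE k 0 W d

end Homology

/-- `td(V) ≤ c`: any torsion element of `V_n` (killed by every injection
`[n] → [n+1]`) with `(n : ℤ) > c` is zero. -/
def tdLE (V : FIMod k) (c : ℤ) : Prop :=
  ∀ n : ℕ, c < (n : ℤ) → ∀ v : V.obj (FIfin n),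
    (∀ f : FIfin n ⟶ FIfin (n + 1), V.map f v = 0) → v = 0

/-- The `i`-th iterated shift `S^i V`. -/
noncomputable def Siter (i : ℕ) (V : FIMod k) : FIMod k := ((Sfun k).obj)^[i] V

/-! ### Auxiliary material for `FI_K_iso_H1D` -/

namespace FIKH1D

variable (k : Type) [CommRing k]

/-- The index type for the canonical free FI-module surjecting onto `V`. -/
abbrev FreeIdx (V : FIMod k) (X : FICat) : Type :=
  Σ n : ℕ, V.obj (FIfin n) × (FIfin n ⟶ X)

/-- The canonical free FI-module surjecting onto `V`. -/
noncomputable def FreeMod (V : FIMod k) : FIMod k where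
  obj X := ModuleCat.of k (FreeIdx k V X →₀ k)
  map {X Y} f := ModuleCat.ofHom (Finsupp.lmapDomain k k
    (fun p : FreeIdx k V X => (⟨p.1, p.2.1, p.2.2 ≫ f⟩ : FreeIdx k V Y)))
  map_id X := by
    apply ModuleCat.hom_ext
    refine LinearMap.ext fun x => ?_
    have h : (fun p : FreeIdx k V X => (⟨p.1, p.2.1, p.2.2 ≫ 𝟙 X⟩ : FreeIdx k V X)) = id := by
      funext p; simp
    show Finsupp.mapDomain
      (fun p : FreeIdx k V X => (⟨p.1, p.2.1, p.2.2 ≫ 𝟙 X⟩ : FreeIdx k V X)) x = x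
    rw [h, Finsupp.mapDomain_id]
  map_comp {X Y Z} f g := by
    apply ModuleCat.hom_ext
    refine LinearMap.ext fun x => ?_
    show Finsupp.mapDomain
      (fun p : FreeIdx k V X => (⟨p.1, p.2.1, p.2.2 ≫ (f ≫ g)⟩ : FreeIdx k V Z)) x =
      Finsupp.mapDomain (fun p : FreeIdx k V Y => (⟨p.1, p.2.1, p.2.2 ≫ g⟩ : FreeIdx k V Z))
        (Finsupp.mapDomain
          (fun p : FreeIdx k V X => (⟨p.1, p.2.1, p.2.2 ≫ f⟩ : FreeIdx k V Y)) x)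
    rw [← Finsupp.mapDomain_comp]
    have h : ((fun p : FreeIdx k V Y => (⟨p.1, p.2.1, p.2.2 ≫ g⟩ : FreeIdx k V Z)) ∘
        (fun p : FreeIdx k V X => (⟨p.1, p.2.1, p.2.2 ≫ f⟩ : FreeIdx k V Y))) =
        (fun p : FreeIdx k V X => (⟨p.1, p.2.1, p.2.2 ≫ (f ≫ g)⟩ : FreeIdx k V Z)) := by
      funext p; simp
    rw [h]

/-- The canonical epimorphism `FreeMod V ⟶ V`. -/
noncomputable def eps (V : FIMod k) : FreeMod k V ⟶ V where
  app X := ModuleCat.ofHom (Finsupp.linearCombination k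
    (fun p : FreeIdx k V X => V.map p.2.2 p.2.1))
  naturality {X Y} f := by
    apply ModuleCat.hom_ext
    refine LinearMap.ext fun x => ?_
    show Finsupp.linearCombination k (fun p : FreeIdx k V Y => V.map p.2.2 p.2.1)
        (Finsupp.mapDomain
          (fun p : FreeIdx k V X => (⟨p.1, p.2.1, p.2.2 ≫ f⟩ : FreeIdx k V Y)) x) =
      V.map f ((Finsupp.linearCombination k
        (fun p : FreeIdx k V X => V.map p.2.2 p.2.1)) x)
    erw [Finsupp.linearCombination_mapDomain]
    rw [show (ConcreteCategory.hom (V.map f)) ((Finsupp.linearCombination k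
      (fun p : FreeIdx k V X => V.map p.2.2 p.2.1)) x) = Finsupp.linearCombination k
        (ConcreteCategory.hom (V.map f) ∘ (fun p : FreeIdx k V X => V.map p.2.2 p.2.1)) x
      from Finsupp.apply_linearCombination k _ _ x]
    have hfun : ((fun p : FreeIdx k V Y => V.map p.2.2 p.2.1) ∘
        (fun p : FreeIdx k V X => (⟨p.1, p.2.1, p.2.2 ≫ f⟩ : FreeIdx k V Y))) =
        (fun p : FreeIdx k V X =>
          ConcreteCategory.hom (V.map f) ((fun p : FreeIdx k V X => V.map p.2.2 p.2.1) p)) := by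
      funext p
      change V.map (p.2.2 ≫ f) p.2.1 = V.map f (V.map p.2.2 p.2.1)
      rw [V.map_comp]; rfl
    rw [hfun]
    rfl

lemma eps_app_surjective (V : FIMod k) (X : FICat) :
    Function.Surjective ((eps k V).app X) := by
  intro x
  set n := Fintype.card X.carrier with hn
  let e : X.carrier ≃ Fin n := Fintype.equivFinOfCardEq rfl
  let hom : FIfin n ⟶ X := ⟨e.symm, e.symm.injective⟩
  let inv : X ⟶ FIfin n := ⟨e, e.injective⟩
  refine ⟨Finsupp.single ⟨n, (V.map inv x, hom)⟩ 1, ?_⟩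
  have h1 : (eps k V).app X (Finsupp.single (⟨n, (V.map inv x, hom)⟩ : FreeIdx k V X) 1)
      = V.map hom (V.map inv x) := by
    show Finsupp.linearCombination k (fun p : FreeIdx k V X => V.map p.2.2 p.2.1)
      (Finsupp.single (⟨n, (V.map inv x, hom)⟩ : FreeIdx k V X) 1) = _
    erw [Finsupp.linearCombination_single, one_smul]
  rw [h1, show V.map hom (V.map inv x) = V.map (inv ≫ hom) x by rw [V.map_comp]; rfl]
  have : inv ≫ hom = 𝟙 X := by
    apply Subtype.ext; funext a
    change e.symm (e a) = a
    simp
  rw [this, V.map_id]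
  rfl

instance eps_epi (V : FIMod k) : Epi (eps k V) := by
  constructor
  intro Z u v h
  apply NatTrans.ext; funext X
  have : Epi ((eps k V).app X) := (ModuleCat.epi_iff_surjective _).2 (eps_app_surjective k V X)
  have h' : (eps k V).app X ≫ u.app X = (eps k V).app X ≫ v.app X := by
    rw [← NatTrans.comp_app, ← NatTrans.comp_app, h]
  exact (cancel_epi ((eps k V).app X)).1 h'

lemma iota_app_free_injective (V : FIMod k) (X : FICat) :
    Function.Injective ((iota k (FreeMod k V)).app X) := by
  change Function.Injective ((FreeMod k V).map (inclStar X))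
  dsimp [FreeMod, Finsupp.lmapDomain]
  apply Finsupp.mapDomain_injective
  rintro ⟨n, v, g⟩ ⟨m, w, g'⟩ h
  injection h with h1 h2
  subst h1
  have h3 : (v, g ≫ inclStar X) = (w, g' ≫ inclStar X) := eq_of_heq h2
  injection h3 with hv hg
  have hgg : g = g' := by
    apply Subtype.ext; funext a
    have : Sum.inl (g.1 a) = Sum.inl (g'.1 a) := congrFun (congrArg Subtype.val hg) a
    exact Sum.inl_injective this
  rw [hv, hgg]

lemma iota_app_injective_of_projective (P : FIMod k) [Projective P] (X : FICat) :
    Function.Injective ((iota k P).app X) := by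
  let s : P ⟶ FreeMod k P := Projective.factorThru (𝟙 P) (eps k P)
  have hs : s ≫ eps k P = 𝟙 P := Projective.factorThru_comp _ _
  have hnat : iota k P ≫ (Sfun k).map s = s ≫ iota k (FreeMod k P) := iota_natural k s
  have happ : (iota k P).app X ≫ ((Sfun k).map s).app X
      = s.app X ≫ (iota k (FreeMod k P)).app X := by
    rw [← NatTrans.comp_app, ← NatTrans.comp_app, hnat]
  have hsinj : Function.Injective (s.app X) := by
    intro a b hab
    have : (eps k P).app X (s.app X a) = (eps k P).app X (s.app X b) := by rw [hab]
    have h1 : ∀ y, (eps k P).app X (s.app X y) = y := by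
      intro y
      have := congrFun (congrArg (fun (η : P ⟶ P) => (η.app X : P.obj X → P.obj X)) hs) y
      exact this
    rwa [h1, h1] at this
  have hcomp : Function.Injective ((iota k (FreeMod k P)).app X ∘ (s.app X)) :=
    (iota_app_free_injective k P X).comp hsinj
  have : Function.Injective (((Sfun k).map s).app X ∘ ((iota k P).app X)) := by
    have : (((Sfun k).map s).app X) ∘ ((iota k P).app X)
        = ((iota k (FreeMod k P)).app X) ∘ (s.app X) := by
      funext y
      exact congrFun (congrArg (fun (f : P.obj X ⟶ _) => (f : P.obj X → _)) happ) y
    rw [this]; exact hcomp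
  exact Function.Injective.of_comp this

lemma iota_mono_of_projective (P : FIMod k) [Projective P] : Mono (iota k P) := by
  constructor
  intro Z u v h
  apply NatTrans.ext; funext X
  have : Mono ((iota k P).app X) :=
    (ModuleCat.mono_iff_injective _).2 (iota_app_injective_of_projective k P X)
  have h' : u.app X ≫ (iota k P).app X = v.app X ≫ (iota k P).app X := by
    rw [← NatTrans.comp_app, ← NatTrans.comp_app, h]
  exact (cancel_mono ((iota k P).app X)).1 h'

end FIKH1D

namespace FIKH1D

noncomputable section

open HomologicalComplex

variable (k : Type) [CommRing k]

instance : PreservesFiniteLimits (Sfun k) := by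
  constructor
  intro J _ _
  show PreservesLimitsOfShape J ((Functor.whiskeringLeft FICat FICat (ModuleCat.{0} k)).obj sigmaF)
  infer_instance

instance : PreservesFiniteColimits (Sfun k) := by
  constructor
  intro J _ _
  show PreservesColimitsOfShape J ((Functor.whiskeringLeft FICat FICat (ModuleCat.{0} k)).obj sigmaF)
  infer_instance

/-- The chain map `CX ⟶ S(CX)` given by `ι` in each degree. -/
def iotaC (CX : HomologicalComplex (FIMod k) (ComplexShape.down ℕ)) :
    CX ⟶ ((Sfun k).mapHomologicalComplex (ComplexShape.down ℕ)).obj CX where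
  f i := iota k (CX.X i)
  comm' i j _ := iota_natural k (CX.d i j)

lemma iotaC_naturality {CX CY : HomologicalComplex (FIMod k) (ComplexShape.down ℕ)}
    (φ : CX ⟶ CY) :
    iotaC k CX ≫ ((Sfun k).mapHomologicalComplex _).map φ = φ ≫ iotaC k CY := by
  apply HomologicalComplex.hom_ext
  intro i
  exact iota_natural k (φ.f i)

/-- The chain map `S(CX) ⟶ D(CX)` given by `cokernel.π` in each degree. -/
def piC (CX : HomologicalComplex (FIMod k) (ComplexShape.down ℕ)) :
    ((Sfun k).mapHomologicalComplex (ComplexShape.down ℕ)).obj CX ⟶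
      ((Dfun k).mapHomologicalComplex (ComplexShape.down ℕ)).obj CX where
  f i := cokernel.π (iota k (CX.X i))
  comm' i j _ := by
    show cokernel.π _ ≫ (Dfun k).map _ = (Sfun k).map _ ≫ cokernel.π _
    simp [Dfun]

lemma piC_naturality {CX CY : HomologicalComplex (FIMod k) (ComplexShape.down ℕ)}
    (φ : CX ⟶ CY) :
    ((Sfun k).mapHomologicalComplex _).map φ ≫ piC k CY =
      piC k CX ≫ ((Dfun k).mapHomologicalComplex _).map φ := by
  apply HomologicalComplex.hom_ext
  intro i
  show (Sfun k).map _ ≫ cokernel.π _ = cokernel.π _ ≫ (Dfun k).map _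
  simp [Dfun]

/-- The short complex of chain complexes `CX ⟶ S(CX) ⟶ D(CX)`. -/
abbrev sesC (CX : HomologicalComplex (FIMod k) (ComplexShape.down ℕ)) :
    ShortComplex (HomologicalComplex (FIMod k) (ComplexShape.down ℕ)) :=
  ShortComplex.mk (iotaC k CX) (piC k CX) (by
    apply HomologicalComplex.hom_ext
    intro i
    show iota k (CX.X i) ≫ cokernel.π _ = _
    simp [iotaC, piC]
    rfl)

lemma sesC_shortExact (CX : HomologicalComplex (FIMod k) (ComplexShape.down ℕ))
    (h : ∀ i, Mono (iota k (CX.X i))) : (sesC k CX).ShortExact := by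
  rw [HomologicalComplex.shortExact_iff_degreewise_shortExact]
  intro i
  exact
    { exact := ShortComplex.exact_of_g_is_cokernel _ (cokernelIsCokernel (iota k (CX.X i)))
      mono_f := h i
      epi_g := by
        show Epi (cokernel.π (iota k (CX.X i)))
        infer_instance }

end

end FIKH1D

namespace FIKH1D

noncomputable section

open HomologicalComplex

variable (k : Type) [CommRing k] [EnoughProjectives (FIMod k)]

variable {V : FIMod k} (P : ProjectiveResolution V)

/-- The short exact sequence `0 ⟶ P ⟶ SP ⟶ DP ⟶ 0` for a projective resolution. -/
lemma hSes : (sesC k P.complex).ShortExact :=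
  sesC_shortExact k P.complex (fun i => iota_mono_of_projective k (P.complex.X i))

omit [EnoughProjectives (FIMod k)] in
lemma rel10' : (ComplexShape.down ℕ).Rel 1 0 := rfl

lemma exactAt_S_one :
    ((((Sfun k).mapHomologicalComplex (ComplexShape.down ℕ)).obj P.complex)).ExactAt 1 := by
  have hL : ((((Sfun k).mapHomologicalComplex (ComplexShape.down ℕ)).obj
      ((ChainComplex.single₀ (FIMod k)).obj V))).ExactAt 1 := by
    have e := (singleMapHomologicalComplex (Sfun k) (ComplexShape.down ℕ) 0).app V
    rw [exactAt_iff]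
    refine ShortComplex.exact_of_iso ((shortComplexFunctor _ _ 1).mapIso e).symm ?_
    rw [← exactAt_iff]
    exact ChainComplex.exactAt_succ_single_obj _ 0
  have hq : QuasiIsoAt (((Sfun k).mapHomologicalComplex (ComplexShape.down ℕ)).map P.π) 1 :=
    inferInstance
  exact (quasiIsoAt_iff_exactAt' _ 1 hL).1 hq

lemma isZero_H1S :
    IsZero (((((Sfun k).mapHomologicalComplex (ComplexShape.down ℕ)).obj
      P.complex)).homology 1) :=
  (exactAt_iff_isZero_homology _ _).1 (exactAt_S_one k P)

lemma mono_delta : Mono ((hSes k P).δ 1 0 rel10') := by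
  have h3 := (hSes k P).homology_exact₃ 1 0 rel10'
  exact h3.mono_g ((isZero_H1S k P).eq_of_src _ _)

/-- The isomorphism `H₀(P) ≅ V`. -/
def e0P : P.complex.homology 0 ≅ V := by
  haveI : IsIso (homologyMap P.π 0) :=
    (quasiIsoAt_iff_isIso_homologyMap P.π 0).1 inferInstance
  exact asIso (homologyMap P.π 0) ≪≫
    singleObjHomologySelfIso (ComplexShape.down ℕ) 0 V

/-- The isomorphism `H₀(SP) ≅ SV`. -/
def e0S : ((((Sfun k).mapHomologicalComplex (ComplexShape.down ℕ)).obj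
    P.complex)).homology 0 ≅ (Sfun k).obj V := by
  haveI : IsIso (homologyMap (((Sfun k).mapHomologicalComplex
      (ComplexShape.down ℕ)).map P.π) 0) :=
    (quasiIsoAt_iff_isIso_homologyMap _ 0).1 inferInstance
  exact asIso (homologyMap (((Sfun k).mapHomologicalComplex (ComplexShape.down ℕ)).map P.π) 0) ≪≫
    (homologyFunctor _ _ 0).mapIso
      ((singleMapHomologicalComplex (Sfun k) (ComplexShape.down ℕ) 0).app V) ≪≫
    singleObjHomologySelfIso (ComplexShape.down ℕ) 0 ((Sfun k).obj V)

lemma iotaC_single (V : FIMod k) :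
    iotaC k ((HomologicalComplex.single (FIMod k) (ComplexShape.down ℕ) 0).obj V) ≫
      (singleMapHomologicalComplex (Sfun k) (ComplexShape.down ℕ) 0).hom.app V =
    (HomologicalComplex.single (FIMod k) (ComplexShape.down ℕ) 0).map (iota k V) := by
  apply HomologicalComplex.hom_ext
  intro i
  by_cases h : i = 0
  · subst h
    show iota k (((HomologicalComplex.single (FIMod k) (ComplexShape.down ℕ) 0).obj V).X 0) ≫
        ((singleMapHomologicalComplex (Sfun k) (ComplexShape.down ℕ) 0).hom.app V).f 0 = _
    rw [singleMapHomologicalComplex_hom_app_self, single_map_f_self,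
      ← Category.assoc, iota_natural k (singleObjXSelf (ComplexShape.down ℕ) 0 V).hom,
      Category.assoc]
  · exact (isZero_single_obj_X (ComplexShape.down ℕ) 0 _ i h).eq_of_tgt _ _

lemma gamma : homologyMap (iotaC k P.complex) 0 ≫ (e0S k P).hom =
    (e0P k P).hom ≫ iota k V := by
  dsimp only [e0P, e0S, Iso.trans_hom, asIso_hom, Functor.mapIso_hom]
  rw [← Category.assoc, ← homologyMap_comp, iotaC_naturality, homologyMap_comp]
  have h1 : (homologyFunctor (FIMod k) (ComplexShape.down ℕ) 0).map
      ((singleMapHomologicalComplex (Sfun k) (ComplexShape.down ℕ) 0).app V).hom =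
      homologyMap ((singleMapHomologicalComplex (Sfun k) (ComplexShape.down ℕ) 0).hom.app V) 0 :=
    rfl
  rw [Category.assoc]
  have key : homologyMap (iotaC k ((ChainComplex.single₀ (FIMod k)).obj V)) 0 ≫
      homologyMap ((singleMapHomologicalComplex (Sfun k) (ComplexShape.down ℕ) 0).hom.app V) 0 =
      homologyMap ((HomologicalComplex.single (FIMod k) (ComplexShape.down ℕ) 0).map (iota k V)) 0 :=
    (homologyMap_comp (φ := iotaC k _) (ψ := _) (i := 0)).symm.trans
      (congrArg (fun φ => homologyMap φ 0) (iotaC_single k V))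
  calc _ = homologyMap P.π 0 ≫ homologyMap (iotaC k ((ChainComplex.single₀ (FIMod k)).obj V)) 0 ≫
        homologyMap ((singleMapHomologicalComplex (Sfun k) (ComplexShape.down ℕ) 0).hom.app V) 0 ≫
        (singleObjHomologySelfIso (ComplexShape.down ℕ) 0 ((Sfun k).obj V)).hom := rfl
    _ = homologyMap P.π 0 ≫
        homologyMap ((HomologicalComplex.single (FIMod k) (ComplexShape.down ℕ) 0).map (iota k V)) 0 ≫
        (singleObjHomologySelfIso (ComplexShape.down ℕ) 0 ((Sfun k).obj V)).hom := by
      rw [reassoc_of% key]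
    _ = _ := by rw [singleObjHomologySelfIso_hom_naturality, Category.assoc]

lemma gamma' : (e0P k P).inv ≫ homologyMap (iotaC k P.complex) 0 =
    iota k V ≫ (e0S k P).inv := by
  rw [← cancel_mono (e0S k P).hom]
  simp only [Category.assoc, gamma k P, Iso.inv_hom_id, Category.comp_id,
    Iso.inv_hom_id_assoc]

/-- `ker ι_V ≅ ker(H₀(P) → H₀(SP))`. -/
def kiso1 : (Kfun k).obj V ≅ kernel (homologyMap (iotaC k P.complex) 0) where
  hom := kernel.map _ _ (e0P k P).inv (e0S k P).inv (gamma' k P).symm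
  inv := kernel.map _ _ (e0P k P).hom (e0S k P).hom (gamma k P)
  hom_inv_id := by
    apply equalizer.hom_ext
    show (kernel.map _ _ (e0P k P).inv (e0S k P).inv (gamma' k P).symm ≫
      kernel.map _ _ (e0P k P).hom (e0S k P).hom (gamma k P)) ≫ kernel.ι (iota k V) =
      𝟙 (kernel (iota k V)) ≫ kernel.ι (iota k V)
    simp
  inv_hom_id := by
    apply equalizer.hom_ext
    show (kernel.map _ _ (e0P k P).hom (e0S k P).hom (gamma k P) ≫
      kernel.map _ _ (e0P k P).inv (e0S k P).inv (gamma' k P).symm) ≫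
      kernel.ι (homologyMap (iotaC k P.complex) 0) =
      𝟙 (kernel (homologyMap (iotaC k P.complex) 0)) ≫ kernel.ι (homologyMap (iotaC k P.complex) 0)
    simp

/-- The exact sequence `H₁(DP) → H₀(P) → H₀(SP)` realizes `H₁(DP)` as a kernel. -/
def kiso2 : kernel (homologyMap (iotaC k P.complex) 0) ≅
    ((((Dfun k).mapHomologicalComplex (ComplexShape.down ℕ)).obj P.complex)).homology 1 := by
  haveI := mono_delta k P
  exact IsLimit.conePointUniqueUpToIso (kernelIsKernel _)
    ((hSes k P).homology_exact₁ 1 0 rel10').fIsKernel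

lemma kiso2_hom_delta : (kiso2 k P).hom ≫ (hSes k P).δ 1 0 rel10' =
    kernel.ι (homologyMap (iotaC k P.complex) 0) := by
  haveI := mono_delta k P
  exact IsLimit.conePointUniqueUpToIso_hom_comp (kernelIsKernel _)
    ((hSes k P).homology_exact₁ 1 0 rel10').fIsKernel WalkingParallelPair.zero

end

end FIKH1D

namespace FIKH1D

noncomputable section

open HomologicalComplex

variable (k : Type) [CommRing k] [EnoughProjectives (FIMod k)]

variable {V W : FIMod k} (P : ProjectiveResolution V) (Q : ProjectiveResolution W) (f : V ⟶ W)

lemma e0P_nat : homologyMap (ProjectiveResolution.lift f P Q) 0 ≫ (e0P k Q).hom =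
    (e0P k P).hom ≫ f := by
  dsimp only [e0P, Iso.trans_hom, asIso_hom]
  rw [← Category.assoc, ← homologyMap_comp, ProjectiveResolution.lift_commutes,
    homologyMap_comp, Category.assoc, singleObjHomologySelfIso_hom_naturality,
    ← Category.assoc]

lemma e0S_nat :
    homologyMap (((Sfun k).mapHomologicalComplex (ComplexShape.down ℕ)).map
      (ProjectiveResolution.lift f P Q)) 0 ≫ (e0S k Q).hom =
    (e0S k P).hom ≫ (Sfun k).map f := by
  dsimp only [e0S, Iso.trans_hom, asIso_hom, Functor.mapIso_hom]
  rw [← Category.assoc, ← homologyMap_comp, ← Functor.map_comp,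
    ProjectiveResolution.lift_commutes, Functor.map_comp, homologyMap_comp]
  have h1 : (homologyFunctor (FIMod k) (ComplexShape.down ℕ) 0).map
      ((singleMapHomologicalComplex (Sfun k) (ComplexShape.down ℕ) 0).app W).hom =
      homologyMap ((singleMapHomologicalComplex (Sfun k) (ComplexShape.down ℕ) 0).hom.app W) 0 :=
    rfl
  have h2 : (homologyFunctor (FIMod k) (ComplexShape.down ℕ) 0).map
      ((singleMapHomologicalComplex (Sfun k) (ComplexShape.down ℕ) 0).app V).hom =
      homologyMap ((singleMapHomologicalComplex (Sfun k) (ComplexShape.down ℕ) 0).hom.app V) 0 :=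
    rfl
  rw [Category.assoc]
  have h3 := (singleMapHomologicalComplex (Sfun k) (ComplexShape.down ℕ) 0).hom.naturality f
  have h3' : ((Sfun k).mapHomologicalComplex (ComplexShape.down ℕ)).map
      ((ChainComplex.single₀ (FIMod k)).map f) ≫
      (singleMapHomologicalComplex (Sfun k) (ComplexShape.down ℕ) 0).hom.app W =
      (singleMapHomologicalComplex (Sfun k) (ComplexShape.down ℕ) 0).hom.app V ≫
      (HomologicalComplex.single (FIMod k) (ComplexShape.down ℕ) 0).map ((Sfun k).map f) := h3
  have key : homologyMap (((Sfun k).mapHomologicalComplex (ComplexShape.down ℕ)).map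
        ((ChainComplex.single₀ (FIMod k)).map f)) 0 ≫
      homologyMap ((singleMapHomologicalComplex (Sfun k) (ComplexShape.down ℕ) 0).hom.app W) 0 =
      homologyMap ((singleMapHomologicalComplex (Sfun k) (ComplexShape.down ℕ) 0).hom.app V) 0 ≫
      homologyMap ((HomologicalComplex.single (FIMod k) (ComplexShape.down ℕ) 0).map
        ((Sfun k).map f)) 0 :=
    (homologyMap_comp (φ := _) (ψ := _) (i := 0)).symm.trans
      ((congrArg (fun φ => homologyMap φ 0) h3').trans (homologyMap_comp (φ := _) (ψ := _) (i := 0)))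
  calc _ = homologyMap (((Sfun k).mapHomologicalComplex (ComplexShape.down ℕ)).map P.π) 0 ≫
        homologyMap (((Sfun k).mapHomologicalComplex (ComplexShape.down ℕ)).map
          ((ChainComplex.single₀ (FIMod k)).map f)) 0 ≫
        homologyMap ((singleMapHomologicalComplex (Sfun k) (ComplexShape.down ℕ) 0).hom.app W) 0 ≫
        (singleObjHomologySelfIso (ComplexShape.down ℕ) 0 ((Sfun k).obj W)).hom := rfl
    _ = homologyMap (((Sfun k).mapHomologicalComplex (ComplexShape.down ℕ)).map P.π) 0 ≫
        homologyMap ((singleMapHomologicalComplex (Sfun k) (ComplexShape.down ℕ) 0).hom.app V) 0 ≫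
        homologyMap ((HomologicalComplex.single (FIMod k) (ComplexShape.down ℕ) 0).map
          ((Sfun k).map f)) 0 ≫
        (singleObjHomologySelfIso (ComplexShape.down ℕ) 0 ((Sfun k).obj W)).hom := by
      rw [reassoc_of% key]
    _ = (homologyMap (((Sfun k).mapHomologicalComplex (ComplexShape.down ℕ)).map P.π) 0 ≫
        (homologyMap ((singleMapHomologicalComplex (Sfun k) (ComplexShape.down ℕ) 0).hom.app V) 0 ≫
        (singleObjHomologySelfIso (ComplexShape.down ℕ) 0 ((Sfun k).obj V)).hom)) ≫
        (Sfun k).map f := by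
      rw [singleObjHomologySelfIso_hom_naturality]; simp only [Category.assoc]
    _ = _ := rfl

lemma e0P_nat' : f ≫ (e0P k Q).inv =
    (e0P k P).inv ≫ homologyMap (ProjectiveResolution.lift f P Q) 0 := by
  rw [← cancel_mono (e0P k Q).hom]
  simp only [Category.assoc, e0P_nat k P Q f, Iso.inv_hom_id, Category.comp_id,
    Iso.inv_hom_id_assoc]

lemma e0S_nat' : (Sfun k).map f ≫ (e0S k Q).inv =
    (e0S k P).inv ≫ homologyMap (((Sfun k).mapHomologicalComplex
      (ComplexShape.down ℕ)).map (ProjectiveResolution.lift f P Q)) 0 := by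
  rw [← cancel_mono (e0S k Q).hom]
  simp only [Category.assoc, e0S_nat k P Q f, Iso.inv_hom_id, Category.comp_id,
    Iso.inv_hom_id_assoc]

omit [EnoughProjectives (FIMod k)] in
lemma hsq {CX CY : HomologicalComplex (FIMod k) (ComplexShape.down ℕ)} (φ : CX ⟶ CY) :
    homologyMap (iotaC k CX) 0 ≫
      homologyMap (((Sfun k).mapHomologicalComplex (ComplexShape.down ℕ)).map φ) 0 =
    homologyMap φ 0 ≫ homologyMap (iotaC k CY) 0 := by
  rw [← homologyMap_comp, ← homologyMap_comp, iotaC_naturality]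

/-- The morphism of short exact sequences of complexes induced by a chain map. -/
@[simps]
def mapSes {CX CY : HomologicalComplex (FIMod k) (ComplexShape.down ℕ)} (φ : CX ⟶ CY) :
    sesC k CX ⟶ sesC k CY where
  τ₁ := φ
  τ₂ := ((Sfun k).mapHomologicalComplex _).map φ
  τ₃ := ((Dfun k).mapHomologicalComplex _).map φ
  comm₁₂ := (iotaC_naturality k φ).symm
  comm₂₃ := piC_naturality k φ

lemma sq1 : (Kfun k).map f ≫ (kiso1 k Q).hom =
    (kiso1 k P).hom ≫
      kernel.map _ _ (homologyMap (ProjectiveResolution.lift f P Q) 0)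
        (homologyMap (((Sfun k).mapHomologicalComplex (ComplexShape.down ℕ)).map
          (ProjectiveResolution.lift f P Q)) 0)
        (hsq k (ProjectiveResolution.lift f P Q)) := by
  apply equalizer.hom_ext
  show ((Kfun k).map f ≫ (kiso1 k Q).hom) ≫ kernel.ι _ = _
  simp only [Kfun, kiso1, Category.assoc, kernel.lift_ι, kernel.lift_ι_assoc]
  rw [e0P_nat' k P Q f]

lemma sq2 :
    kernel.map _ _ (homologyMap (ProjectiveResolution.lift f P Q) 0)
        (homologyMap (((Sfun k).mapHomologicalComplex (ComplexShape.down ℕ)).map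
          (ProjectiveResolution.lift f P Q)) 0)
        (hsq k (ProjectiveResolution.lift f P Q)) ≫ (kiso2 k Q).hom =
    (kiso2 k P).hom ≫
      homologyMap (((Dfun k).mapHomologicalComplex (ComplexShape.down ℕ)).map
        (ProjectiveResolution.lift f P Q)) 1 := by
  haveI := mono_delta k Q
  refine (cancel_mono ((hSes k Q).δ 1 0 rel10')).1 ?_
  have hδ := HomologicalComplex.HomologySequence.δ_naturality
    (mapSes k (ProjectiveResolution.lift f P Q)) (hSes k P) (hSes k Q) 1 0 rel10'
  simp only [mapSes_τ₁, mapSes_τ₃] at hδ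
  rw [Category.assoc, kiso2_hom_delta, Category.assoc, ← hδ, ← Category.assoc,
    kiso2_hom_delta, kernel.lift_ι]

/-- The isomorphism `KV ≅ (L₁D)(V)`. -/
def objIso (V : FIMod k) : (Kfun k).obj V ≅ ((Dfun k).leftDerived 1).obj V :=
  kiso1 k (projectiveResolution V) ≪≫ kiso2 k (projectiveResolution V) ≪≫
    ((projectiveResolution V).isoLeftDerivedObj (Dfun k) 1).symm

lemma objIso_nat : (Kfun k).map f ≫ (objIso k W).hom =
    (objIso k V).hom ≫ ((Dfun k).leftDerived 1).map f := by
  show (Kfun k).map f ≫ ((kiso1 k (projectiveResolution W)).hom ≫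
      (kiso2 k (projectiveResolution W)).hom ≫
      ((projectiveResolution W).isoLeftDerivedObj (Dfun k) 1).inv) =
    ((kiso1 k (projectiveResolution V)).hom ≫ (kiso2 k (projectiveResolution V)).hom ≫
      ((projectiveResolution V).isoLeftDerivedObj (Dfun k) 1).inv) ≫ ((Dfun k).leftDerived 1).map f
  rw [← Category.assoc ((Kfun k).map f),
    sq1 k (projectiveResolution V) (projectiveResolution W) f]
  simp only [Category.assoc]
  erw [reassoc_of% (sq2 k (projectiveResolution V) (projectiveResolution W) f)]
  have h3 := ProjectiveResolution.isoLeftDerivedObj_inv_naturality f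
    (projectiveResolution V) (projectiveResolution W)
    (ProjectiveResolution.lift f _ _)
    (ProjectiveResolution.lift_commutes_zero f _ _) (Dfun k) 1
  have h4 : homologyMap (((Dfun k).mapHomologicalComplex (ComplexShape.down ℕ)).map
      (ProjectiveResolution.lift f (projectiveResolution V) (projectiveResolution W))) 1 ≫
      ((projectiveResolution W).isoLeftDerivedObj (Dfun k) 1).inv =
      ((projectiveResolution V).isoLeftDerivedObj (Dfun k) 1).inv ≫
        ((Dfun k).leftDerived 1).map f := by
    exact h3.symm
  erw [h4]
  exact congrArg (fun g => (kiso1 k (projectiveResolution V)).hom ≫ g) (Category.assoc _ _ _).symm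

end

end FIKH1D
/-- `KV = ker(ι : V → SV)` is naturally isomorphic to `H₁^D(V)`, the first
left derived functor of the derivative functor `D`. -/
theorem FI_K_iso_H1D (k : Type) [CommRing k]
    [CategoryTheory.EnoughProjectives (FIMod k)] :
    Nonempty (Kfun k ≅ (Dfun k).leftDerived 1) :=
  ⟨NatIso.ofComponents (FIKH1D.objIso k) (fun f => FIKH1D.objIso_nat k f)⟩
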